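/- If the logging policy π₀ has deficient support, i.e., the set 𝒰(x) = {a ∈ 𝒜 : π₀(a|x) = 0} may be nonempty, then the importance-weighted reward estimator (with convention 0/0 · r = 0) has bias E_x[ −∑_{a ∈ 𝒰(x)} π(a|x) r(x,a) ]; that is, E_x E_{a∼π₀(·|x)}[ (π(a|x)/π₀(a|x)) r(x,a) ] − E_x E_{a∼π(·|x)}[ r(x,a) ] = E_x[ −∑_{a∈𝒰(x)} π(a|x) r(x,a) ]. -/

import Mathlib

/-! Where `π₀ x a ≠ 0` the importance weight cancels exactly, `π₀ · (π / π₀) · r = π · r`, so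
the estimator misses precisely the reward mass `π · r` on actions outside the support of `π₀`. -/

open Finset

section ImportanceWeighting

variable {K : Type*} [Field K] [DecidableEq K]

theorem mul_ite_div_mul_sub (p q r : K) :
    q * (if q = 0 then 0 else p / q * r) - p * r = if q = 0 then -(p * r) else 0 := by
  split_ifs with hq
  · simp
  · rw [div_mul_eq_mul_div, mul_div_cancel₀ _ hq, sub_self]

theorem sum_mul_ite_div_mul_sub_sum {A : Type*} [Fintype A] (p q r : A → K) :
    ∑ a, q a * (if q a = 0 then 0 else p a / q a * r a) - ∑ a, p a * r a
      = -∑ a ∈ univ.filter (fun a => q a = 0), p a * r a := by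
  rw [← sum_sub_distrib]
  simp only [mul_ite_div_mul_sub]
  rw [sum_ite, sum_const_zero, add_zero, sum_neg_distrib]

end ImportanceWeighting

open scoped Classical in
theorem ips_bias_deficient_support_general
    {X A : Type*} [Fintype X] [Fintype A]
    (P : X → ℝ) (π₀ π : X → A → ℝ) (r : X → A → ℝ) :
    (∑ x, P x * ∑ a, π₀ x a *
        (if π₀ x a = 0 then 0 else π x a / π₀ x a * r x a))
      - ∑ x, P x * ∑ a, π x a * r x a
    = ∑ x, P x *
        (-(∑ a ∈ Finset.univ.filter (fun a => π₀ x a = 0), π x a * r x a)) := by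
  rw [← sum_sub_distrib]
  refine sum_congr rfl fun x _ => ?_
  rw [← mul_sub, sum_mul_ite_div_mul_sub_sum]

open scoped Classical in
/-- Bias of the IPS estimator under deficient support (Prop. 1): with the
convention that terms with `π₀ x a = 0` contribute `0`, the difference between
the importance-weighted value and the true value equals
`E_x[ -∑_{a ∈ U(x)} π(a|x) r(x,a) ]`. -/
theorem ips_bias_deficient_support
    {X A : Type*} [Fintype X] [Fintype A]
    (P : X → ℝ) (π₀ π : X → A → ℝ) (r : X → A → ℝ)
    (hPnonneg : ∀ x, 0 ≤ P x) (hPsum : ∑ x, P x = 1)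
    (hπ₀nonneg : ∀ x a, 0 ≤ π₀ x a) (hπ₀sum : ∀ x, ∑ a, π₀ x a = 1)
    (hπnonneg : ∀ x a, 0 ≤ π x a) (hπsum : ∀ x, ∑ a, π x a = 1) :
    (∑ x, P x * ∑ a, π₀ x a *
        (if π₀ x a = 0 then 0 else π x a / π₀ x a * r x a))
      - ∑ x, P x * ∑ a, π x a * r x a
    = ∑ x, P x *
        (-(∑ a ∈ Finset.univ.filter (fun a => π₀ x a = 0), π x a * r x a)) :=
  ips_bias_deficient_support_general P π₀ π r
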